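/- arXiv:2307.11746 — 6 statements merged into one kernel-verified Lean document; each statement's English description precedes it below -/
import Mathlib

section
/- Let W_• be a power tower on K with all relative degrees finite. Then the sequence of degrees is nonincreasing: [W_0 : W_1] ≥ [W_1 : W_2] ≥ … ≥ [W_{n-1} : W_n] ≥ … . -/
/-- The subfield `K^{p^n}` of `p^n`-th powers of `K`. -/
noncomputable def pfield (K : Type*) [Field K] (p : ℕ) [hp : Fact p.Prime] [CharP K p]
    (n : ℕ) : Subfield K :=
  haveI : ExpChar K p := .prime hp.out
  (iterateFrobenius K p n).fieldRange

/-- The subfield `k = ⋂_{n ≥ 0} K^{p^n}`. -/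
noncomputable def kfield (K : Type*) [Field K] (p : ℕ) [Fact p.Prime] [CharP K p] : Subfield K :=
  ⨅ n : ℕ, pfield K p n

/-- A power tower on `K`: a sequence of subfields with `W j = W i · K^{p^j}` for `j ≤ i`. -/
def IsPowerTower (K : Type*) [Field K] (p : ℕ) [Fact p.Prime] [CharP K p]
    (W : ℕ → Subfield K) : Prop :=
  ∀ ⦃i j : ℕ⦄, j ≤ i → W j = W i ⊔ pfield K p j

/-- The degree `[A : B]` for subfields `B ≤ A` of `K` (computed as `[B ⊔ A : B]`). -/
noncomputable def relrank {K : Type*} [Field K] (B A : Subfield K) : ℕ :=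
  letI := (Subfield.inclusion (le_sup_left : B ≤ B ⊔ A)).toAlgebra
  Module.finrank ↥B ↥(B ⊔ A)

/-- Finiteness of the degree `[A : B]` (as `[B ⊔ A : B]`). -/
def finRel {K : Type*} [Field K] (B A : Subfield K) : Prop :=
  letI := (Subfield.inclusion (le_sup_left : B ≤ B ⊔ A)).toAlgebra
  FiniteDimensional ↥B ↥(B ⊔ A)

/-!
Frobenius `φ : x ↦ x ^ p` is injective, so `[φ W_n : φ W_{n+1}] = [W_n : W_{n+1}]`.
The tower axioms give `φ W_{n+1} ≤ W_{n+2}` and `W_{n+1} = W_{n+2} · φ W_n`. Thus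
`W_{n+1} / W_{n+2}` is the base change of the finite extension `φ W_n / φ W_{n+1}` along
`φ W_{n+1} ≤ W_{n+2}`, and base change does not increase degrees:
`[W_{n+1} : W_{n+2}] ≤ [φ W_n : φ W_{n+1}] = [W_n : W_{n+1}]`.
-/

open Cardinal

section Subfield

variable {K : Type*} [Field K]

theorem Subfield.rank_inclusion_eq_relrank {B C : Subfield K} (h : B ≤ C) :
    (letI := (inclusion h).toAlgebra; Module.rank B C) = relrank B C := by
  rw [relrank_eq_rank_of_le h]
  rfl

theorem relrank_eq_toNat_relrank {B A : Subfield K} (h : B ≤ A) :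
    relrank B A = toNat (Subfield.relrank B A) :=
  (congrArg toNat (Subfield.rank_inclusion_eq_relrank le_sup_left)).trans
    (by rw [sup_eq_right.mpr h])

theorem finRel.relrank_lt_aleph0 {B A : Subfield K} (h : B ≤ A) (hfin : finRel B A) :
    Subfield.relrank B A < ℵ₀ := by
  let := (Subfield.inclusion (le_sup_left : B ≤ B ⊔ A)).toAlgebra
  have : FiniteDimensional B ↥(B ⊔ A) := hfin
  have hlt := Module.rank_lt_aleph0 B ↥(B ⊔ A)
  rwa [Subfield.rank_inclusion_eq_relrank, sup_eq_right.mpr h] at hlt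

theorem Subfield.relrank_sup_le_of_le {E' F E : Subfield K} (hF : E' ≤ F) (hE : E' ≤ E)
    (hfin : relrank E' E < ℵ₀) : relrank F (F ⊔ E) ≤ relrank E' E := by
  set F' : IntermediateField E' K := extendScalars hF
  set E'' : IntermediateField E' K := extendScalars hE
  have hrank : relrank E' E = Module.rank E' E'' := relrank_eq_rank_of_le hE
  have : FiniteDimensional E' E'' := Module.rank_lt_aleph0_iff.mp (hrank ▸ hfin)
  have hrange : Set.range (algebraMap F' K) = F := Subtype.range_coe
  have hbot : (⊥ : IntermediateField F' K).toSubfield = F := by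
    rw [IntermediateField.bot_toSubfield]
    exact SetLike.coe_injective hrange
  have hadjoin : (IntermediateField.adjoin F' (E'' : Set K)).toSubfield = F ⊔ E := by
    rw [IntermediateField.adjoin_toSubfield, hrange, closure_union, coe_extendScalars,
      closure_eq, closure_eq]
  have hcompositum :
      relrank F (F ⊔ E) = Module.rank F' (IntermediateField.adjoin F' (E'' : Set K)) := by
    rw [← IntermediateField.relrank_bot_left, IntermediateField.relrank, hbot, hadjoin]
  rw [hcompositum, hrank]
  exact IntermediateField.adjoin_rank_le_of_isAlgebraic_right F' E''

theorem Subfield.map_frobenius_le {p : ℕ} [ExpChar K p] (W : Subfield K) :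
    W.map (frobenius K p) ≤ W := by
  rintro _ ⟨y, hy, rfl⟩
  exact pow_mem hy p

end Subfield

section PowerTower

variable {K : Type*} [Field K] {p : ℕ} [Fact p.Prime] [CharP K p]

theorem pfield_map_frobenius [ExpChar K p] (n : ℕ) :
    (pfield K p n).map (frobenius K p) = pfield K p (n + 1) := by
  ext x
  simp only [pfield, Subfield.mem_map, RingHom.mem_fieldRange, iterateFrobenius_def,
    frobenius_def]
  constructor
  · rintro ⟨_, ⟨z, rfl⟩, rfl⟩
    exact ⟨z, by rw [← pow_mul, pow_succ]⟩
  · rintro ⟨z, rfl⟩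
    exact ⟨z ^ p ^ n, ⟨z, rfl⟩, by rw [← pow_mul, pow_succ]⟩

namespace IsPowerTower

variable {W : ℕ → Subfield K} (hW : IsPowerTower K p W)
include hW

theorem succ_le (n : ℕ) : W (n + 1) ≤ W n :=
  (hW n.le_succ).symm ▸ le_sup_left

theorem pfield_le (n : ℕ) : pfield K p n ≤ W n :=
  (hW le_rfl).symm ▸ le_sup_right

variable [ExpChar K p]

theorem map_frobenius_le_succ (n : ℕ) : (W n).map (frobenius K p) ≤ W (n + 1) := by
  rw [hW n.le_succ, Subfield.map_sup, pfield_map_frobenius]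
  exact sup_le (W (n + 1)).map_frobenius_le (hW.pfield_le (n + 1))

theorem sup_map_frobenius (n : ℕ) : W (n + 2) ⊔ (W n).map (frobenius K p) = W (n + 1) := by
  rw [hW n.le_succ, Subfield.map_sup, pfield_map_frobenius, ← sup_assoc,
    sup_eq_left.mpr (hW.map_frobenius_le_succ (n + 1)), ← hW (n + 1).le_succ]

theorem relrank_succ_le (n : ℕ) (hfin : Subfield.relrank (W (n + 1)) (W n) < ℵ₀) :
    Subfield.relrank (W (n + 2)) (W (n + 1)) ≤ Subfield.relrank (W (n + 1)) (W n) := by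
  have hmap := Subfield.relrank_map_map (W (n + 1)) (W n) (frobenius K p)
  calc Subfield.relrank (W (n + 2)) (W (n + 1))
      = Subfield.relrank (W (n + 2)) (W (n + 2) ⊔ (W n).map (frobenius K p)) := by
        rw [hW.sup_map_frobenius]
    _ ≤ Subfield.relrank ((W (n + 1)).map (frobenius K p)) ((W n).map (frobenius K p)) :=
        Subfield.relrank_sup_le_of_le (hW.map_frobenius_le_succ (n + 1))
          ((Subfield.gc_map_comap _).monotone_l (hW.succ_le n)) (hmap ▸ hfin)
    _ = Subfield.relrank (W (n + 1)) (W n) := hmap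

end IsPowerTower

end PowerTower

theorem stmt2_general {K : Type*} [Field K] (p : ℕ) [Fact p.Prime] [CharP K p]
    (W : ℕ → Subfield K) (hW : IsPowerTower K p W)
    (hfin : ∀ n : ℕ, finRel (W (n + 1)) (W n)) :
    ∀ n : ℕ, relrank (W (n + 2)) (W (n + 1)) ≤ relrank (W (n + 1)) (W n) := by
  have : ExpChar K p := .prime ‹Fact p.Prime›.out
  intro n
  have hlt := (hfin n).relrank_lt_aleph0 (hW.succ_le n)
  rw [relrank_eq_toNat_relrank (hW.succ_le (n + 1)), relrank_eq_toNat_relrank (hW.succ_le n)]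
  exact toNat_le_toNat (hW.relrank_succ_le n hlt) hlt

/-- in a power tower with all relative degrees finite, the degrees
`[W n : W (n+1)]` are nonincreasing in `n`. -/
theorem stmt2 {K : Type*} [Field K] (p : ℕ) [Fact p.Prime] [CharP K p]
    (hfg : ∃ s : Finset K, IntermediateField.adjoin ↥(kfield K p) (s : Set K) = ⊤)
    (W : ℕ → Subfield K) (hW : IsPowerTower K p W)
    (hfin : ∀ n : ℕ, finRel (W (n + 1)) (W n)) :
    ∀ n : ℕ, relrank (W (n + 2)) (W (n + 1)) ≤ relrank (W (n + 1)) (W n) :=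
  stmt2_general p W hW hfin
end

section
/- Let n ≥ 1. There is a bijection between subfields W of K with K^{p^n} ⊆ W ⊆ K of exponent exactly n, and power towers on K of length exactly n; the bijection sends a power tower W_• to W_n, and conversely W to the tower W_i := W · K^{p^i} for i ≤ n and W_i := W for i ≥ n. -/
/-- A power tower has length at most `n` if `W N = W n` for all `N ≥ n`. -/
def LenLE {K : Type*} [Field K] (W : ℕ → Subfield K) (n : ℕ) : Prop :=
  ∀ N : ℕ, n ≤ N → W N = W n

/-!
A power tower of length at most `n` is recovered from its `n`-th term: `W_i = W_n · K^{p^i}` for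
`i ≤ n` by the tower relation, and for `i ≥ n` both sides equal `W_n` because
`K^{p^i} ⊆ K^{p^n} ⊆ W_n`. For a field `W ⊇ K^{p^n}`, the tower `i ↦ W · K^{p^i}` stabilises from
`m` on exactly when `K^{p^m} ⊆ W`, so the length of the tower is the exponent of `W`.
-/

section PowerTower

variable {K : Type*} [Field K] {p : ℕ} [Fact p.Prime] [CharP K p]

theorem pfield_antitone : Antitone (pfield K p) := by
  intro j i h
  have : ExpChar K p := .prime (Fact.out : p.Prime)
  rintro x ⟨y, rfl⟩
  refine ⟨y ^ p ^ (i - j), ?_⟩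
  simp only [iterateFrobenius_def, ← pow_mul, ← pow_add, Nat.sub_add_cancel h]

theorem sup_pfield_eq_self {W : Subfield K} {n i : ℕ} (hW : pfield K p n ≤ W) (hi : n ≤ i) :
    W ⊔ pfield K p i = W :=
  sup_eq_left.mpr ((pfield_antitone hi).trans hW)

theorem isPowerTower_sup_pfield (W : Subfield K) :
    IsPowerTower K p (fun i => W ⊔ pfield K p i) := by
  intro i j hji
  rw [sup_assoc, sup_eq_right.mpr (pfield_antitone hji)]

theorem lenLE_sup_pfield_iff {W : Subfield K} {n : ℕ} (hW : pfield K p n ≤ W) (m : ℕ) :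
    LenLE (fun i => W ⊔ pfield K p i) m ↔ pfield K p m ≤ W := by
  constructor
  · intro hm
    have h := hm (max m n) (le_max_left m n)
    simp only [sup_pfield_eq_self hW (le_max_right m n)] at h
    exact h ▸ le_sup_right
  · intro hmW N hN
    simp only [sup_pfield_eq_self hmW hN, sup_pfield_eq_self hmW le_rfl]

theorem IsPowerTower.pfield_le_s4 {T : ℕ → Subfield K} (hT : IsPowerTower K p T) (i : ℕ) :
    pfield K p i ≤ T i :=
  hT le_rfl ▸ le_sup_right

theorem IsPowerTower.eq_sup_pfield {T : ℕ → Subfield K} (hT : IsPowerTower K p T) {n : ℕ}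
    (hlen : LenLE T n) : T = fun i => T n ⊔ pfield K p i := by
  funext i
  rcases le_total i n with h | h
  · exact hT h
  · rw [hlen i h, sup_pfield_eq_self (hT.pfield_le_s4 n) h]

end PowerTower

theorem stmt4_general {K : Type*} [Field K] (p : ℕ) [Fact p.Prime] [CharP K p] (n : ℕ) :
    (∀ T : ℕ → Subfield K,
        IsPowerTower K p T → LenLE T n → (∀ m < n, ¬ LenLE T m) →
          pfield K p n ≤ T n ∧ ∀ m < n, ¬ pfield K p m ≤ T n) ∧
    (∀ W : Subfield K, pfield K p n ≤ W → (∀ m < n, ¬ pfield K p m ≤ W) →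
        (IsPowerTower K p (fun i => W ⊔ pfield K p i) ∧
            LenLE (fun i => W ⊔ pfield K p i) n ∧
            (∀ m < n, ¬ LenLE (fun i => W ⊔ pfield K p i) m) ∧
            W ⊔ pfield K p n = W) ∧
        ∀ T : ℕ → Subfield K,
          IsPowerTower K p T → LenLE T n → (∀ m < n, ¬ LenLE T m) → T n = W →
            T = fun i => W ⊔ pfield K p i) := by
  constructor
  · intro T hT hlen hmin
    refine ⟨hT.pfield_le_s4 n, fun m hm hle => hmin m hm ?_⟩
    rw [hT.eq_sup_pfield hlen]
    exact (lenLE_sup_pfield_iff (hT.pfield_le_s4 n) m).2 hle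
  · intro W hWn hWm
    refine ⟨⟨isPowerTower_sup_pfield W, (lenLE_sup_pfield_iff hWn n).2 hWn, ?_,
      sup_pfield_eq_self hWn le_rfl⟩, ?_⟩
    · exact fun m hm hle => hWm m hm ((lenLE_sup_pfield_iff hWn m).1 hle)
    · exact fun T hT hlen _ hTn => hTn ▸ hT.eq_sup_pfield hlen

/-- for `n ≥ 1`, power towers of length exactly `n` biject with subfields of
exponent exactly `n`, via `W_• ↦ W_n`; the inverse sends `W` to the tower
`i ↦ W · K^{p^i}` (constant equal to `W` from `n` on). -/
theorem stmt4 {K : Type*} [Field K] (p : ℕ) [Fact p.Prime] [CharP K p] (n : ℕ) (hn : 1 ≤ n) :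
    (∀ T : ℕ → Subfield K,
        IsPowerTower K p T → LenLE T n → (∀ m < n, ¬ LenLE T m) →
          pfield K p n ≤ T n ∧ ∀ m < n, ¬ pfield K p m ≤ T n) ∧
    (∀ W : Subfield K, pfield K p n ≤ W → (∀ m < n, ¬ pfield K p m ≤ W) →
        (IsPowerTower K p (fun i => W ⊔ pfield K p i) ∧
            LenLE (fun i => W ⊔ pfield K p i) n ∧
            (∀ m < n, ¬ LenLE (fun i => W ⊔ pfield K p i) m) ∧
            W ⊔ pfield K p n = W) ∧
        ∀ T : ℕ → Subfield K,
          IsPowerTower K p T → LenLE T n → (∀ m < n, ¬ LenLE T m) → T n = W →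
            T = fun i => W ⊔ pfield K p i) :=
  stmt4_general p n
end

section
/- Let K be a field of characteristic p > 0 with K/k finitely generated, k = ⋂_n K^{p^n}. Then Diff_k^{≤ p^{n-1}}(K) ⊆ Diff_{K^{p^n}}(K) for all n ≥ 1, and consequently Diff_k(K) = ⋃_{n≥0} Diff_{K^{p^n}}(K). -/
/-- The commutator `[a, D] = a∘D − D∘a` of multiplication by `a` with an operator `D`. -/
def Brk {R A : Type*} [CommSemiring R] [CommRing A] [Algebra R A]
    (a : A) (D : A →ₗ[R] A) : A →ₗ[R] A :=
  (LinearMap.mulLeft R a).comp D - D.comp (LinearMap.mulLeft R a)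

/-- `OrdLE n D`: `D` is a differential operator of order at most `n`, i.e. all iterated
commutators `[a₀,[a₁,…,[aₙ,D]…]]` with `n+1` multiplications vanish. -/
def OrdLE {R A : Type*} [CommSemiring R] [CommRing A] [Algebra R A] :
    ℕ → (A →ₗ[R] A) → Prop
  | 0, D => ∀ a : A, Brk a D = 0
  | n + 1, D => ∀ a : A, OrdLE n (Brk a D)

/-- `D` is a differential operator (of some finite order) on `A` relative to `R`. -/
def IsDiffOp (R A : Type*) [CommSemiring R] [CommRing A] [Algebra R A]
    (D : A →ₗ[R] A) : Prop :=
  ∃ n : ℕ, OrdLE n D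

/-! In characteristic `p`, left and right multiplication by `c` commute, so
`ad_c ^ p^n = ad_{c^{p^n}}`. An operator of order `m < p^n` is killed by `ad_c^{m+1}`,
hence by `ad_{c^{p^n}}`, i.e. it is `K^{p^n}`-linear; this gives the inclusion and one half
of the union, since `m < p^m`.

Conversely, let `D` be `F`-linear with `F = K^{p^n}`. As `k ⊆ F`, `K` is finitely generated
over `F`, and purely inseparable, hence finite. The multiplication operators form a Lie
subalgebra of `End_F K` acting on `End_F K` by commutators, and each acts nilpotently since
`ad_c^{p^n} = ad_{c^{p^n}}` and `c^{p^n}` is an `F`-scalar. By Engel's theorem the lower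
central series of this Lie module reaches `0`, which bounds the order of every `F`-linear
operator. -/

open LieAlgebra

attribute [local instance] LieRing.ofAssociativeRing

instance Module.End.expChar {R A : Type*} [CommSemiring R] [Semiring A] [Algebra R A]
    {p : ℕ} [ExpChar A p] : ExpChar (Module.End R A) p :=
  expChar_of_injective_ringHom (f := (Algebra.lmul R A).toRingHom) Algebra.lmul_injective p

theorem LieAlgebra.ad_pow_expChar_pow {R A : Type*} [CommRing R] [Ring A] [Algebra R A]
    (p n : ℕ) [ExpChar A p] (x : A) : ad R A x ^ p ^ n = ad R A (x ^ p ^ n) := by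
  rw [ad_eq_lmul_left_sub_lmul_right, Pi.sub_apply,
    sub_pow_expChar_pow_of_commute p n (LinearMap.commute_mulLeft_right x x),
    LinearMap.pow_mulLeft, LinearMap.pow_mulRight, Pi.sub_apply]

section Brk

variable {R A : Type*} [CommRing R] [CommRing A] [Algebra R A]

theorem brk_eq_ad (a : A) (D : Module.End R A) :
    Brk a D = ad R (Module.End R A) (LinearMap.mulLeft R a) D := by
  rw [ad_apply, LieRing.of_associative_ring_bracket]
  rfl

theorem OrdLE.ad_pow_eq_zero {m : ℕ} {D : Module.End R A} (h : OrdLE m D) (c : A) :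
    (ad R (Module.End R A) (LinearMap.mulLeft R c) ^ (m + 1)) D = 0 := by
  induction m generalizing D with
  | zero => rw [pow_one, ← brk_eq_ad, h c]
  | succ m ih => rw [pow_succ, Module.End.mul_apply, ← brk_eq_ad, ih (h c)]

theorem OrdLE.brk_pow_eq_zero (p : ℕ) [ExpChar A p] {m n : ℕ} {D : Module.End R A}
    (h : OrdLE m D) (hm : m < p ^ n) (c : A) : Brk (c ^ p ^ n) D = 0 := by
  rw [brk_eq_ad, ← LinearMap.pow_mulLeft, ← ad_pow_expChar_pow p n, ← Nat.sub_add_cancel hm,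
    pow_add, Module.End.mul_apply, h.ad_pow_eq_zero, map_zero]

theorem OrdLE.map_pow_mul (p : ℕ) [ExpChar A p] {m n : ℕ} {D : Module.End R A}
    (h : OrdLE m D) (hm : m < p ^ n) (c x : A) : D (c ^ p ^ n * x) = c ^ p ^ n * D x := by
  have hx := LinearMap.congr_fun (h.brk_pow_eq_zero p hm c) x
  exact (sub_eq_zero.mp hx).symm

end Brk

theorem coe_brk {R A : Type*} [CommSemiring R] [CommRing A] [Algebra R A] (a : A)
    (D : A →ₗ[R] A) : ⇑(Brk a D) = fun x => a * D x - D (a * x) :=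
  rfl

theorem ordLE_congr {R₁ R₂ A : Type*} [CommSemiring R₁] [CommSemiring R₂] [CommRing A]
    [Algebra R₁ A] [Algebra R₂ A] {D₁ : A →ₗ[R₁] A} {D₂ : A →ₗ[R₂] A} (h : ⇑D₁ = ⇑D₂) {m : ℕ} :
    OrdLE m D₁ ↔ OrdLE m D₂ := by
  have hbrk : ∀ {D₁ : A →ₗ[R₁] A} {D₂ : A →ₗ[R₂] A}, ⇑D₁ = ⇑D₂ → ∀ a, ⇑(Brk a D₁) = ⇑(Brk a D₂) :=
    fun h a => by rw [coe_brk, coe_brk, h]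
  induction m generalizing D₁ D₂ with
  | zero =>
    refine forall_congr' fun a => ?_
    simp only [LinearMap.ext_iff, hbrk h a, LinearMap.zero_apply]
  | succ m ih => exact forall_congr' fun a => ih (hbrk h a)

section Backward

variable (F K : Type*) [Field F] [CommRing K] [Algebra F K]

noncomputable def lmulRange : LieSubalgebra F (Module.End F K) :=
  (Algebra.lmul F K).toLieHom.range

variable {F K}

theorem brk_eq_lie (a : K) (D : Module.End F K) :
    Brk a D = ⁅(⟨Algebra.lmul F K a, a, rfl⟩ : lmulRange F K), D⁆ := by
  rw [LieSubalgebra.coe_bracket_of_module, LieRing.of_associative_ring_bracket]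
  rfl

theorem brk_mem_lowerCentralSeries_succ {j : ℕ} {D : Module.End F K}
    (hD : D ∈ LieModule.lowerCentralSeries F (lmulRange F K) (Module.End F K) j) (a : K) :
    Brk a D ∈ LieModule.lowerCentralSeries F (lmulRange F K) (Module.End F K) (j + 1) := by
  rw [brk_eq_lie, LieModule.lowerCentralSeries_succ]
  exact LieSubmodule.lie_mem_lie (LieSubmodule.mem_top _) hD

theorem ordLE_of_mem_lowerCentralSeries {j m : ℕ}
    (hm : LieModule.lowerCentralSeries F (lmulRange F K) (Module.End F K) (j + m + 1) = ⊥)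
    {D : Module.End F K}
    (hD : D ∈ LieModule.lowerCentralSeries F (lmulRange F K) (Module.End F K) j) : OrdLE m D := by
  induction m generalizing j D with
  | zero =>
    intro a
    have h := brk_mem_lowerCentralSeries_succ hD a
    rw [add_zero] at hm
    rwa [hm, LieSubmodule.mem_bot] at h
  | succ m ih =>
    refine fun a => ih ?_ (brk_mem_lowerCentralSeries_succ hD a)
    rwa [show j + 1 + m + 1 = j + (m + 1) + 1 by omega]

theorem isNilpotent_toEnd_lmulRange (p n : ℕ) [ExpChar K p]
    (hpow : ∀ c : K, c ^ p ^ n ∈ (algebraMap F K).range) (x : lmulRange F K) :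
    IsNilpotent (LieModule.toEnd F (lmulRange F K) (Module.End F K) x) := by
  obtain ⟨_, a, rfl⟩ := x
  obtain ⟨μ, hμ⟩ := hpow a
  refine ⟨p ^ n, ?_⟩
  change ad F (Module.End F K) (Algebra.lmul F K a) ^ p ^ n = 0
  rw [ad_pow_expChar_pow, ← map_pow, ← hμ, AlgHom.commutes]
  ext D : 1
  rw [ad_apply, Ring.lie_def, Algebra.commutes, sub_self, LinearMap.zero_apply]

theorem isDiffOp_of_forall_pow_mem_range [Module.Finite F K] (p n : ℕ) [ExpChar K p]
    (hpow : ∀ c : K, c ^ p ^ n ∈ (algebraMap F K).range) (D : Module.End F K) :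
    IsDiffOp F K D := by
  have : LieModule.IsNilpotent (lmulRange F K) (Module.End F K) :=
    (LieModule.isNilpotent_iff_forall' (R := F)).2 (isNilpotent_toEnd_lmulRange p n hpow)
  obtain ⟨k, hk⟩ := LieModule.IsNilpotent.nilpotent F (lmulRange F K) (Module.End F K)
  refine ⟨k, ordLE_of_mem_lowerCentralSeries (j := 0) ?_ (by simp)⟩
  exact eq_bot_iff.2 (hk ▸ LieModule.antitone_lowerCentralSeries _ _ _ (by omega))

end Backward

theorem IntermediateField.adjoin_eq_top_of_le {K : Type*} [Field K] {F E : Subfield K}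
    (hFE : F ≤ E) {S : Set K} (h : IntermediateField.adjoin F S = ⊤) :
    IntermediateField.adjoin E S = ⊤ := by
  refine eq_top_iff.2 fun x _ => ?_
  have hx : x ∈ (IntermediateField.adjoin F S).toSubfield := h ▸ trivial
  refine Subfield.closure_mono (Set.union_subset_union_left S ?_) hx
  rintro _ ⟨y, rfl⟩
  exact ⟨⟨y, hFE y.2⟩, rfl⟩

section PowerFields

variable {K : Type*} [Field K] {p : ℕ} [hp : Fact p.Prime] [CharP K p]

theorem pow_mem_pfield (n : ℕ) (c : K) : c ^ p ^ n ∈ pfield K p n :=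
  have : ExpChar K p := .prime hp.out
  ⟨c, iterateFrobenius_def p n c⟩

theorem finite_pfield {s : Finset K}
    (hs : IntermediateField.adjoin (kfield K p) (s : Set K) = ⊤) (n : ℕ) :
    Module.Finite (pfield K p n) K := by
  have hint (x : K) : IsIntegral (pfield K p n) x :=
    .of_pow (pow_pos hp.out.pos n)
      (isIntegral_algebraMap (x := (⟨x ^ p ^ n, pow_mem_pfield n x⟩ : pfield K p n)))
  have hfin := IntermediateField.finiteDimensional_adjoin (S := (s : Set K)) fun x _ => hint x
  rw [IntermediateField.adjoin_eq_top_of_le (iInf_le _ n) hs] at hfin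
  exact Module.Finite.equiv IntermediateField.topEquiv.toLinearEquiv

noncomputable def pfieldLinearMap {n : ℕ} (D : K →ₗ[kfield K p] K)
    (hD : ∀ c x : K, D (c ^ p ^ n * x) = c ^ p ^ n * D x) : K →ₗ[pfield K p n] K where
  toFun := D
  map_add' := D.map_add
  map_smul' := by
    rintro ⟨_, c, rfl⟩ x
    exact hD c x

end PowerFields

/-- `Diff_k^{≤ p^{n-1}}(K) ⊆ Diff_{K^{p^n}}(K)` for `n ≥ 1` (operators of
order at most `p^{n-1}` are `K^{p^n}`-linear), and consequently `Diff_k(K)` is the union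
of the `Diff_{K^{p^n}}(K) = End_{K^{p^n}}(K)`: a `k`-linear operator is a differential
operator iff it is `K^{p^n}`-linear for some `n`. -/
theorem stmt8 {K : Type*} [Field K] (p : ℕ) [Fact p.Prime] [CharP K p]
    (hfg : ∃ s : Finset K, IntermediateField.adjoin ↥(kfield K p) (s : Set K) = ⊤) :
    (∀ n : ℕ, 1 ≤ n → ∀ D : K →ₗ[↥(kfield K p)] K, OrdLE (p ^ (n - 1)) D →
        ∀ c x : K, D (c ^ p ^ n * x) = c ^ p ^ n * D x) ∧
    ∀ D : K →ₗ[↥(kfield K p)] K,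
      IsDiffOp ↥(kfield K p) K D ↔ ∃ n : ℕ, ∀ c x : K, D (c ^ p ^ n * x) = c ^ p ^ n * D x := by
  have hp : 1 < p := (Fact.out : p.Prime).one_lt
  have : ExpChar K p := .prime Fact.out
  refine ⟨fun n hn D hD => hD.map_pow_mul p (Nat.pow_lt_pow_right hp (by omega)), fun D => ⟨?_, ?_⟩⟩
  · rintro ⟨m, hm⟩
    exact ⟨m, hm.map_pow_mul p (Nat.lt_pow_self hp)⟩
  · rintro ⟨n, hn⟩
    obtain ⟨s, hs⟩ := hfg
    have := finite_pfield hs n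
    obtain ⟨m, hm⟩ := isDiffOp_of_forall_pow_mem_range p n
      (fun c => ⟨⟨_, pow_mem_pfield n c⟩, rfl⟩) (pfieldLinearMap D hn)
    exact ⟨m, (ordLE_congr (D₁ := pfieldLinearMap D hn) (D₂ := D) rfl).1 hm⟩
end

section
/- Let K be a field of characteristic p > 0 and W ⊆ K a subfield. Setting W_n := W · K^{p^n}, one has (W^s)_n = W_n for all n, where W^s is the separable closure of W in K. Consequently each W_n is separably closed in K. -/
/-- The separable closure of a subfield `W` inside `K`, as a subfield of `K`. -/
noncomputable def sepCl {K : Type*} [Field K] (W : Subfield K) : Subfield K :=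
  (separableClosure ↥W K).toSubfield

lemma pow_mem_pfield_s12 {K : Type*} [Field K] (p : ℕ) [hp : Fact p.Prime] [CharP K p]
    (n : ℕ) (x : K) : x ^ p ^ n ∈ pfield K p n := by
  have : ExpChar K p := .prime hp.out
  exact ⟨x, by simp [iterateFrobenius_def]⟩

lemma isPurelyInseparable_of_pfield_le {K : Type*} [Field K] (p : ℕ) [hp : Fact p.Prime]
    [CharP K p] {n : ℕ} {F : Subfield K} (h : pfield K p n ≤ F) :
    IsPurelyInseparable F K := by
  have : CharP F p := CharP.subring K p F.toSubring
  have : ExpChar F p := .prime hp.out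
  refine (isPurelyInseparable_iff_pow_mem F p).2 fun x ↦ ⟨n, ?_⟩
  exact ⟨⟨x ^ p ^ n, h (pow_mem_pfield_s12 p n x)⟩, rfl⟩

lemma sepCl_eq_self_of_isPurelyInseparable {K : Type*} [Field K] (F : Subfield K)
    [IsPurelyInseparable F K] : sepCl F = F := by
  rw [sepCl, separableClosure.eq_bot_of_isPurelyInseparable, IntermediateField.bot_toSubfield]
  exact Subfield.fieldRange_subtype F

lemma le_sepCl {K : Type*} [Field K] (W : Subfield K) : W ≤ sepCl W := fun x hx ↦
  (bot_le : ⊥ ≤ separableClosure W K) (IntermediateField.mem_bot.2 ⟨⟨x, hx⟩, rfl⟩)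

lemma sepCl_mono {K : Type*} [Field K] {W W' : Subfield K} (h : W ≤ W') :
    sepCl W ≤ sepCl W' := fun x hx ↦ by
  let := (Subfield.inclusion h).toAlgebra
  have : IsScalarTower W W' K := .of_algebraMap_eq fun _ ↦ rfl
  exact IsSeparable.tower_top W' (show IsSeparable W x from hx)

theorem stmt12_general {K : Type*} [Field K] (p : ℕ) [Fact p.Prime] [CharP K p]
    (W : Subfield K) :
    ∀ n : ℕ, sepCl W ⊔ pfield K p n = W ⊔ pfield K p n ∧
      sepCl (W ⊔ pfield K p n) = W ⊔ pfield K p n := by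
  intro n
  have := isPurelyInseparable_of_pfield_le p (le_sup_right : pfield K p n ≤ W ⊔ pfield K p n)
  have hclosed := sepCl_eq_self_of_isPurelyInseparable (W ⊔ pfield K p n)
  have hsepCl_le : sepCl W ≤ W ⊔ pfield K p n := hclosed ▸ sepCl_mono le_sup_left
  exact ⟨le_antisymm (sup_le hsepCl_le le_sup_right) (sup_le_sup_right (le_sepCl W) _), hclosed⟩

/-- with `W^s` the separable closure of `W` in `K`, one has
`W^s · K^{p^n} = W · K^{p^n}` for all `n`; consequently each `W · K^{p^n}` is separably
closed in `K`. -/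
theorem stmt12 {K : Type*} [Field K] (p : ℕ) [Fact p.Prime] [CharP K p]
    (hfg : ∃ s : Finset K, IntermediateField.adjoin ↥(kfield K p) (s : Set K) = ⊤)
    (W : Subfield K) :
    ∀ n : ℕ, sepCl W ⊔ pfield K p n = W ⊔ pfield K p n ∧
      sepCl (W ⊔ pfield K p n) = W ⊔ pfield K p n :=
  stmt12_general p W
end

section
/- Let K be a field of characteristic p > 0 with [K : K^p] finite. Let W_1 be a subfield with K^p ⊆ W_1 ⊊ K. Then there exists a subfield W_2 with K^{p^2} ⊆ W_2 ⊆ W_1 such that W_2 · K^p = W_1 and [W_1 : W_2] = [K : W_1]. (Every 1-foliation on K extends to a 2-foliation.) -/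
/-!
Let `G = W₁^p` be the image of `W₁` under Frobenius, so that `K^{p²} ⊆ G ⊆ K^p ⊆ W₁` and
`[K^p : G] = [K : W₁]`. Since `W₁^p ⊆ G`, adjoining to `G` and to `K^p` the same element
`b ∈ W₁` not yet reached multiplies both degrees by `p` (each time the minimal polynomial is
`X^p - b^p`). Repeating this until `K^p` has grown to `W₁` produces `W₂ ⊇ G` with
`W₂ · K^p = W₁` and `[W₂ : G] = [W₁ : K^p]`; comparing the towers `G ⊆ W₂ ⊆ W₁` and
`G ⊆ K^p ⊆ W₁` then gives `[W₁ : W₂] = [K^p : G] = [K : W₁]`.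
-/

open Polynomial

namespace Subfield

variable {K : Type*} [Field K]

theorem sup_closure_singleton_eq_adjoin (F : Subfield K) (b : K) :
    F ⊔ closure {b} = (IntermediateField.adjoin F {b}).toSubfield := by
  rw [IntermediateField.adjoin_toSubfield, closure_union,
    show Set.range (algebraMap F K) = F from Subtype.range_coe, F.closure_eq]

variable {p : ℕ} [hp : Fact p.Prime] [CharP K p]

theorem relfinrank_sup_closure_singleton_of_pow_mem {F : Subfield K} {b : K}
    (hb : b ∉ F) (hbp : b ^ p ∈ F) : F.relfinrank (F ⊔ closure {b}) = p := by
  set c : F := ⟨b ^ p, hbp⟩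
  have hroot : aeval b ((X : F[X]) ^ p - C c) = 0 := by
    simp [c, Algebra.algebraMap_ofSubsemiring_apply]
  have hmonic : ((X : F[X]) ^ p - C c).Monic := monic_X_pow_sub_C _ hp.out.ne_zero
  -- `c` has no `p`-th root in `F`, since its only `p`-th root in `K` is `b`.
  have hirr : Irreducible ((X : F[X]) ^ p - C c) :=
    X_pow_sub_C_irreducible_of_prime hp.out fun y hy => hb <|
      frobenius_inj K p (congrArg Subtype.val hy) ▸ y.2
  have hmin : minpoly F b = X ^ p - C c :=
    (minpoly.eq_of_irreducible_of_monic hirr hroot hmonic).symm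
  have hle : F ≤ F ⊔ closure {b} := le_sup_left
  have hE : extendScalars hle = IntermediateField.adjoin F {b} :=
    IntermediateField.toSubfield_injective <| by
      rw [extendScalars_toSubfield, sup_closure_singleton_eq_adjoin]
  rw [relfinrank_eq_finrank_of_le hle, hE,
    IntermediateField.adjoin.finrank ⟨_, hmonic, hroot⟩, hmin, natDegree_X_pow_sub_C]

theorem exists_sup_eq_relfinrank_eq_of_pow_mem {G F W : Subfield K} (hGF : G ≤ F)
    (hFW : F ≤ W) (hpow : ∀ x ∈ W, x ^ p ∈ G) (hfin : F.relfinrank W ≠ 0) :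
    ∃ V : Subfield K, G ≤ V ∧ V ≤ W ∧ V ⊔ F = W ∧ G.relfinrank V = F.relfinrank W := by
  induction hn : F.relfinrank W using Nat.strong_induction_on generalizing G F with
  | _ n IH =>
  by_cases hWF : W ≤ F
  · obtain rfl := le_antisymm hFW hWF
    exact ⟨G, le_rfl, hGF, sup_eq_right.mpr hGF, by rw [relfinrank_self, ← hn, relfinrank_self]⟩
  obtain ⟨b, hbW, hbF⟩ := Set.not_subset.mp hWF
  have hbG : b ∉ G := fun h => hbF (hGF h)
  have hF'W : F ⊔ closure {b} ≤ W := sup_le hFW (closure_le.mpr (by simpa using hbW))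
  have htower := relfinrank_mul_relfinrank (le_sup_left : F ≤ F ⊔ closure {b}) hF'W
  rw [relfinrank_sup_closure_singleton_of_pow_mem hbF (hGF (hpow b hbW)), hn] at htower
  have hfin' : (F ⊔ closure {b}).relfinrank W ≠ 0 := right_ne_zero_of_mul (htower ▸ hn ▸ hfin)
  obtain ⟨V, hG'V, hVW, hsup, hrank⟩ :=
    IH _ (by nlinarith [hp.out.two_le, Nat.pos_of_ne_zero hfin']) (sup_le_sup_right hGF _) hF'W
      (fun x hx => le_sup_left (a := G) (hpow x hx)) hfin' rfl
  refine ⟨V, le_sup_left.trans hG'V, hVW, ?_, ?_⟩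
  · rw [← hsup, sup_comm F, ← sup_assoc, sup_eq_left.mpr (le_sup_right.trans hG'V)]
  · rw [← relfinrank_mul_relfinrank le_sup_left hG'V, hrank,
      relfinrank_sup_closure_singleton_of_pow_mem hbG (hpow b hbW), ← htower]

end Subfield

section

variable {K : Type*} [Field K]

theorem relrank_eq_relfinrank_sup (B A : Subfield K) : relrank B A = B.relfinrank (B ⊔ A) := by
  rw [Subfield.relfinrank_eq_finrank_of_le le_sup_left]
  rfl

theorem relfinrank_sup_ne_zero_of_finRel {B A : Subfield K} (h : finRel B A) :
    B.relfinrank (B ⊔ A) ≠ 0 := by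
  rw [Subfield.relfinrank_eq_finrank_of_le le_sup_left]
  have : FiniteDimensional B (Subfield.extendScalars (le_sup_left : B ≤ B ⊔ A)) := h
  exact Module.finrank_pos.ne'

variable (K) (p : ℕ) [Fact p.Prime] [CharP K p]

theorem pfield_zero : pfield K p 0 = ⊤ := by
  ext x
  exact ⟨fun _ => trivial, fun _ => ⟨x, pow_one x⟩⟩

theorem pfield_succ (n : ℕ) : pfield K p (n + 1) = (pfield K p n).map (frobenius K p) := by
  rw [pfield, pfield, RingHom.fieldRange_eq_map, RingHom.fieldRange_eq_map, Subfield.map_map]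
  congr 1
  ext x
  simp [iterateFrobenius_def, frobenius_def, pow_succ, pow_mul]

end

theorem stmt16_general {K : Type*} [Field K] (p : ℕ) [Fact p.Prime] [CharP K p]
    (hfin : finRel (pfield K p 1) ⊤)
    (W1 : Subfield K) (h1 : pfield K p 1 ≤ W1) :
    ∃ W2 : Subfield K, pfield K p 2 ≤ W2 ∧ W2 ≤ W1 ∧
      W2 ⊔ pfield K p 1 = W1 ∧ relrank W2 W1 = relrank W1 ⊤ := by
  set G := W1.map (frobenius K p)
  have hGK : G ≤ pfield K p 1 := by
    rw [pfield_succ, pfield_zero]; exact (Subfield.gc_map_comap _).monotone_l le_top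
  have hdegG : G.relfinrank (pfield K p 1) = W1.relfinrank ⊤ := by
    rw [pfield_succ, pfield_zero]; exact Subfield.relfinrank_map_map _ _ _
  have hfin1 : (pfield K p 1).relfinrank W1 ≠ 0 := left_ne_zero_of_mul <| by
    rw [Subfield.relfinrank_mul_relfinrank h1 le_top, ← sup_top_eq (pfield K p 1)]
    exact relfinrank_sup_ne_zero_of_finRel hfin
  obtain ⟨V, hGV, hVW, hsup, hdegV⟩ :=
    Subfield.exists_sup_eq_relfinrank_eq_of_pow_mem hGK h1 (fun x hx => ⟨x, hx, rfl⟩) hfin1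
  have hp2 : pfield K p 2 ≤ G :=
    (pfield_succ K p 1).trans_le ((Subfield.gc_map_comap _).monotone_l h1)
  refine ⟨V, hp2.trans hGV, hVW, hsup, ?_⟩
  rw [relrank_eq_relfinrank_sup, relrank_eq_relfinrank_sup, sup_eq_right.mpr hVW, sup_top_eq]
  have htower := Subfield.relfinrank_mul_relfinrank hGV hVW
  rw [← Subfield.relfinrank_mul_relfinrank hGK h1, hdegG, hdegV, mul_comm] at htower
  exact Nat.eq_of_mul_eq_mul_right (Nat.pos_of_ne_zero hfin1) htower

/-- if `[K : K^p]` is finite and `K^p ⊆ W₁ ⊊ K`, then there is a subfield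
`W₂` with `K^{p²} ⊆ W₂ ⊆ W₁`, `W₂ · K^p = W₁` and `[W₁ : W₂] = [K : W₁]`: every
1-foliation on `K` extends to a 2-foliation. -/
theorem stmt16 {K : Type*} [Field K] (p : ℕ) [Fact p.Prime] [CharP K p]
    (hfin : finRel (pfield K p 1) ⊤)
    (W1 : Subfield K) (h1 : pfield K p 1 ≤ W1) (hne : W1 ≠ ⊤) :
    ∃ W2 : Subfield K, pfield K p 2 ≤ W2 ∧ W2 ≤ W1 ∧
      W2 ⊔ pfield K p 1 = W1 ∧ relrank W2 W1 = relrank W1 ⊤ :=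
  stmt16_general p hfin W1 h1
end

section
/- Let k be a perfect field of characteristic p > 0, K = k(x,y), and A_1, A_2, … ∈ k. Define W_n := k(x + A_1 y^p + A_2 y^{p^2} + … + A_{n-1} y^{p^{n-1}}, y^{p^n}) for n ≥ 1 and W_0 = K. Then W_• is a power tower on K with [W_{n-1} : W_n] = p for every n ≥ 1, i.e. an ∞-foliation of rank 1. -/
open Polynomial
open scoped IntermediateField

theorem Transcendental.add_algebraMap {R A : Type*} [CommRing R] [Nontrivial R] [CommRing A]
    [Algebra R A] {x : A} (hx : Transcendental R x) (r : R) :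
    Transcendental R (x + algebraMap R A r) := by
  convert hx.aeval (X + C r) (by rw [natDegree_X_add_C]; exact one_ne_zero)
    (by rw [leadingCoeff_X_add_C]; exact one_mem _) using 1
  simp

theorem algebraicIndependent_pair_iff {R A : Type*} [CommRing R] [CommRing A] [Algebra R A]
    {a b : A} :
    AlgebraicIndependent R ![a, b] ↔
      Transcendental R b ∧ Transcendental (Algebra.adjoin R {b}) a := by
  have h : (fun o : Option (Fin 1) ↦ o.elim a ![b]) ∘ finSuccEquiv 1 = ![a, b] := by
    ext i; fin_cases i <;> rfl
  rw [algebraicIndependent_equiv' (finSuccEquiv 1) h, AlgebraicIndependent.option_iff,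
    algebraicIndependent_unique_type_iff, Matrix.range_cons, Matrix.range_empty,
    Set.union_empty]
  rfl

theorem AlgebraicIndependent.transcendental_adjoin_add_pow {R A : Type*} [CommRing R]
    [CommRing A] [Nontrivial A] [Algebra R A] {x y c : A} (h : AlgebraicIndependent R ![x, y])
    (hc : c ∈ Algebra.adjoin R {y}) {m : ℕ} (hm : 0 < m) :
    Transcendental (Algebra.adjoin R {x + c}) (y ^ m) := by
  obtain ⟨hy, hx⟩ := algebraicIndependent_pair_iff.mp h
  have hxc : AlgebraicIndependent R ![x + c, y] :=
    algebraicIndependent_pair_iff.mpr ⟨hy, hx.add_algebraMap ⟨c, hc⟩⟩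
  have := hxc.transcendental_adjoin (s := {0}) (i := 1) (by decide)
  rw [Set.image_singleton] at this
  exact this.pow hm

theorem Transcendental.notMem_adjoin_simple_pow {F L : Type*} [Field F] [Field L] [Algebra F L]
    {θ : L} (hθ : Transcendental F θ) {p : ℕ} (hp : 1 < p) : θ ∉ F⟮θ ^ p⟯ := by
  rw [IntermediateField.mem_adjoin_simple_iff]
  rintro ⟨a, b, hab⟩
  have hb : Polynomial.aeval (θ ^ p) b ≠ 0 := by
    intro h
    rw [h, div_zero] at hab
    exact hθ (hab ▸ isAlgebraic_zero)
  have hrel : X * expand F p b = expand F p a := by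
    rw [← sub_eq_zero]
    refine (transcendental_iff.mp hθ) _ ?_
    rw [map_sub, map_mul, aeval_X, expand_aeval, expand_aeval, sub_eq_zero]
    nth_rw 1 [hab]
    exact div_mul_cancel₀ _ hb
  have hb0 : b ≠ 0 := by rintro rfl; exact hb (map_zero _)
  have hdeg := congrArg natDegree hrel
  rw [natDegree_X_mul ((expand_eq_zero (by omega)).not.mpr hb0), natDegree_expand,
    natDegree_expand] at hdeg
  have : p ∣ 1 := (Nat.dvd_add_right (dvd_mul_left p _)).mp (hdeg ▸ dvd_mul_left p _)
  exact hp.ne' (Nat.dvd_one.mp this)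

theorem Subfield.range_algebraMap {K : Type*} [Field K] (B : Subfield K) :
    Set.range (algebraMap B K) = B :=
  Subtype.range_coe

theorem Subfield.closure_union_eq_toSubfield_adjoin {K : Type*} [Field K] (B : Subfield K)
    (S : Set K) : Subfield.closure (B ∪ S) = (IntermediateField.adjoin B S).toSubfield := by
  rw [IntermediateField.adjoin_toSubfield, B.range_algebraMap]

theorem relrank_toSubfield_eq_finrank {K : Type*} [Field K] (B : Subfield K)
    (E : IntermediateField B K) : relrank B E.toSubfield = Module.finrank B E := by
  have hsup : ∀ z, z ∈ B ⊔ E.toSubfield ↔ z ∈ E := by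
    intro z
    rw [sup_eq_right.mpr fun b hb ↦ E.algebraMap_mem ⟨b, hb⟩]
    rfl
  let := (Subfield.inclusion (le_sup_left : B ≤ B ⊔ E.toSubfield)).toAlgebra
  let e : ↥(B ⊔ E.toSubfield) ≃ₗ[B] E :=
    { toFun := fun a ↦ ⟨a, (hsup a).mp a.2⟩
      invFun := fun a ↦ ⟨a, (hsup a).mpr a.2⟩
      left_inv := fun _ ↦ rfl
      right_inv := fun _ ↦ rfl
      map_add' := fun _ _ ↦ rfl
      map_smul' := fun _ _ ↦ rfl }
  exact e.finrank_eq

theorem finrank_adjoin_simple_of_pow_eq {F L : Type*} [Field F] [Field L] [Algebra F L]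
    (p : ℕ) [hp : Fact p.Prime] [CharP L p] {θ : L} {c : F} (hc : θ ^ p = algebraMap F L c)
    (hθ : θ ∉ Set.range (algebraMap F L)) : Module.finrank F F⟮θ⟯ = p := by
  have : ExpChar L p := .prime hp.out
  have hirr : Irreducible (X ^ p - C c) := by
    refine X_pow_sub_C_irreducible_of_prime hp.out fun b hb ↦ hθ ⟨b, ?_⟩
    exact (frobenius_inj L p) (by simp only [frobenius_def, ← map_pow, hb, hc])
  have hmonic := monic_X_pow_sub_C c hp.out.ne_zero
  have hroot : aeval θ (X ^ p - C c) = 0 := by simp [hc]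
  rw [IntermediateField.adjoin.finrank ⟨_, hmonic, hroot⟩,
    ← minpoly.eq_of_irreducible_of_monic hirr hroot hmonic, natDegree_X_pow_sub_C]

theorem pow_notMem_closure_union_pow {K : Type*} [Field K] (k : Subfield K) {x y c : K}
    (h : AlgebraicIndependent k ![x, y]) (hc : c ∈ Algebra.adjoin k {y}) {m p : ℕ} (hm : 0 < m)
    (hp : 1 < p) : y ^ m ∉ Subfield.closure (k ∪ {x + c, (y ^ m) ^ p}) := by
  rw [k.closure_union_eq_toSubfield_adjoin, Set.insert_eq,
    ← IntermediateField.adjoin_adjoin_left]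
  exact (IntermediateField.transcendental_adjoin_iff.mpr
    (h.transcendental_adjoin_add_pow hc hm)).notMem_adjoin_simple_pow hp

theorem relrank_closure_union_singleton {K : Type*} [Field K] (p : ℕ) [Fact p.Prime] [CharP K p]
    (B : Subfield K) {θ : K} (hθp : θ ^ p ∈ B) (hθ : θ ∉ B) :
    relrank B (Subfield.closure (B ∪ {θ})) = p := by
  rw [B.closure_union_eq_toSubfield_adjoin, relrank_toSubfield_eq_finrank]
  exact finrank_adjoin_simple_of_pow_eq p (c := ⟨_, hθp⟩) rfl (by rwa [B.range_algebraMap])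

theorem mem_pfield {K : Type*} [Field K] {p : ℕ} [Fact p.Prime] [CharP K p] {n : ℕ} {z : K} :
    z ∈ pfield K p n ↔ ∃ b, b ^ p ^ n = z :=
  Iff.rfl

section Tower

variable {K : Type*} [Field K] (p : ℕ) (k : Subfield K) (x y : K) (A : ℕ → K)

/-- The element `t_n` above. The sum starts at `1`, so `A 0` plays no role and `t_0 = t_1 = x`. -/
def twistedX (n : ℕ) : K :=
  x + ∑ i ∈ Finset.Ico 1 n, A i * y ^ p ^ i

def towerField (n : ℕ) : Subfield K :=
  Subfield.closure (k ∪ {twistedX p x y A n, y ^ p ^ n})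

theorem twistedX_succ (n : ℕ) :
    twistedX p x y A (n + 1) = x + ∑ i ∈ Finset.range n, A (i + 1) * y ^ p ^ (i + 1) := by
  simp only [twistedX, Finset.sum_Ico_eq_sum_range, add_tsub_cancel_right, add_comm 1]

theorem twistedX_zero : twistedX p x y A 0 = x := by
  simp [twistedX]

variable {p k x y A}

theorem twistedX_sub_twistedX_mem (hA : ∀ i, A i ∈ k) {m n : ℕ} (hmn : m ≤ n) {L : Subfield K}
    (hkL : k ≤ L) (hyL : y ^ p ^ m ∈ L) : twistedX p x y A n - twistedX p x y A m ∈ L := by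
  have hsub : Finset.Ico 1 m ⊆ Finset.Ico 1 n := Finset.Ico_subset_Ico_right hmn
  rw [twistedX, twistedX, add_sub_add_left_eq_sub, ← Finset.sum_sdiff_eq_sub hsub]
  refine sum_mem fun i hi ↦ mul_mem (hkL (hA i)) ?_
  have hmi : m ≤ i := by
    simp only [Finset.mem_sdiff, Finset.mem_Ico] at hi
    omega
  rw [show p ^ i = p ^ m * p ^ (i - m) by rw [← pow_add, Nat.add_sub_cancel' hmi], pow_mul]
  exact pow_mem hyL _

variable (p k x y A)

theorem le_towerField (n : ℕ) : k ≤ towerField p k x y A n :=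
  fun _ ha ↦ Subfield.subset_closure (Or.inl ha)

theorem twistedX_mem_towerField (n : ℕ) : twistedX p x y A n ∈ towerField p k x y A n :=
  Subfield.subset_closure (Or.inr (Set.mem_insert _ _))

theorem pow_mem_towerField (n : ℕ) : y ^ p ^ n ∈ towerField p k x y A n :=
  Subfield.subset_closure (Or.inr (Set.mem_insert_of_mem _ rfl))

variable {p k x y A}

theorem towerField_le_of_mem {n : ℕ} {L : Subfield K} (hkL : k ≤ L)
    (hxL : twistedX p x y A n ∈ L) (hyL : y ^ p ^ n ∈ L) : towerField p k x y A n ≤ L := by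
  rw [towerField, Subfield.closure_le]
  rintro z (hz | rfl | rfl)
  exacts [hkL hz, hxL, hyL]

theorem towerField_antitone (hA : ∀ i, A i ∈ k) : Antitone (towerField p k x y A) := by
  intro m n hmn
  have hy := pow_mem_towerField p k x y A m
  refine towerField_le_of_mem (le_towerField p k x y A m) ?_ ?_
  · rw [← sub_add_cancel (twistedX p x y A n) (twistedX p x y A m)]
    exact add_mem (twistedX_sub_twistedX_mem hA hmn (le_towerField p k x y A m) hy)
      (twistedX_mem_towerField p k x y A m)
  · rw [show p ^ n = p ^ m * p ^ (n - m) by rw [← pow_add, Nat.add_sub_cancel' hmn], pow_mul]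
    exact pow_mem hy _

theorem pfield_le_towerField [Fact p.Prime] [CharP K p] (hA : ∀ i, A i ∈ k)
    (hgen : Subfield.closure (k ∪ {x, y}) = ⊤) (n : ℕ) :
    pfield K p n ≤ towerField p k x y A n := by
  have : ExpChar K p := .prime Fact.out
  let φ := iterateFrobenius K p n
  suffices ⊤ ≤ (towerField p k x y A n).comap φ by
    rintro _ ⟨b, rfl⟩
    exact this (Subfield.mem_top b)
  have hk : k ≤ (towerField p k x y A n).comap φ := fun a ha ↦ by
    simpa [φ, iterateFrobenius_def] using le_towerField p k x y A n (pow_mem ha (p ^ n))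
  have hy : y ∈ (towerField p k x y A n).comap φ := by
    simpa [φ, iterateFrobenius_def] using pow_mem_towerField p k x y A n
  have hxn : twistedX p x y A n ∈ (towerField p k x y A n).comap φ := by
    simpa [φ, iterateFrobenius_def] using pow_mem (twistedX_mem_towerField p k x y A n) (p ^ n)
  have hx : x ∈ (towerField p k x y A n).comap φ := by
    have : twistedX p x y A n - (twistedX p x y A n - twistedX p x y A 0) ∈
        (towerField p k x y A n).comap φ :=
      sub_mem hxn (twistedX_sub_twistedX_mem hA n.zero_le hk (by rwa [pow_zero, pow_one]))
    rwa [twistedX_zero, sub_sub_self] at this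
  rw [← hgen, Subfield.closure_le]
  rintro z (hz | rfl | rfl)
  exacts [hk hz, hx, hy]

theorem towerField_le_sup_pfield [Fact p.Prime] [CharP K p] (hA : ∀ i, A i ∈ k) {m n : ℕ}
    (hmn : m ≤ n) : towerField p k x y A m ≤ towerField p k x y A n ⊔ pfield K p m := by
  have hk : k ≤ towerField p k x y A n ⊔ pfield K p m :=
    (le_towerField p k x y A n).trans le_sup_left
  have hy : y ^ p ^ m ∈ towerField p k x y A n ⊔ pfield K p m :=
    le_sup_right (a := towerField p k x y A n) (mem_pfield.mpr ⟨y, rfl⟩)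
  refine towerField_le_of_mem hk ?_ hy
  rw [← sub_sub_self (twistedX p x y A n) (twistedX p x y A m)]
  exact sub_mem (le_sup_left (b := pfield K p m) (twistedX_mem_towerField p k x y A n))
    (twistedX_sub_twistedX_mem hA hmn hk hy)

theorem isPowerTower_towerField [Fact p.Prime] [CharP K p] (hA : ∀ i, A i ∈ k)
    (hgen : Subfield.closure (k ∪ {x, y}) = ⊤) : IsPowerTower K p (towerField p k x y A) :=
  fun _ _ hji ↦ le_antisymm (towerField_le_sup_pfield hA hji)
    (sup_le (towerField_antitone hA hji) (pfield_le_towerField hA hgen _))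

theorem towerField_eq_closure_union_pow (hA : ∀ i, A i ∈ k) (n : ℕ) :
    towerField p k x y A n =
      Subfield.closure (towerField p k x y A (n + 1) ∪ {y ^ p ^ n}) := by
  have hy : y ^ p ^ n ∈ Subfield.closure (towerField p k x y A (n + 1) ∪ {y ^ p ^ n}) :=
    Subfield.subset_closure (Or.inr rfl)
  have hW : towerField p k x y A (n + 1) ≤
      Subfield.closure (towerField p k x y A (n + 1) ∪ {y ^ p ^ n}) :=
    fun _ hz ↦ Subfield.subset_closure (Or.inl hz)
  refine le_antisymm (towerField_le_of_mem ((le_towerField p k x y A _).trans hW) ?_ hy) ?_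
  · rw [← sub_sub_self (twistedX p x y A (n + 1)) (twistedX p x y A n)]
    exact sub_mem (hW (twistedX_mem_towerField p k x y A _))
      (twistedX_sub_twistedX_mem hA n.le_succ ((le_towerField p k x y A _).trans hW) hy)
  · rw [Subfield.closure_le]
    rintro z (hz | rfl)
    exacts [towerField_antitone hA n.le_succ hz, pow_mem_towerField p k x y A n]

theorem pow_notMem_towerField_succ (hp : 1 < p) (hA : ∀ i, A i ∈ k)
    (halg : AlgebraicIndependent k ![x, y]) (n : ℕ) :
    y ^ p ^ n ∉ towerField p k x y A (n + 1) := by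
  have hc : twistedX p x y A (n + 1) - x ∈ Algebra.adjoin k {y} := by
    rw [twistedX, add_sub_cancel_left]
    refine Subalgebra.sum_mem _ fun i _ ↦ Subalgebra.mul_mem _ ?_ ?_
    · exact Subalgebra.algebraMap_mem _ (⟨A i, hA i⟩ : k)
    · exact Subalgebra.pow_mem _ (Algebra.self_mem_adjoin_singleton k y) _
  have := pow_notMem_closure_union_pow k halg hc (pow_pos (zero_lt_one.trans hp) n) hp
  rwa [add_sub_cancel, ← pow_mul, ← pow_succ] at this

theorem relrank_towerField_succ [Fact p.Prime] [CharP K p] (hA : ∀ i, A i ∈ k)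
    (halg : AlgebraicIndependent k ![x, y]) (n : ℕ) :
    relrank (towerField p k x y A (n + 1)) (towerField p k x y A n) = p := by
  rw [towerField_eq_closure_union_pow hA n]
  refine relrank_closure_union_singleton p _ ?_
    (pow_notMem_towerField_succ (Fact.out : p.Prime).one_lt hA halg n)
  rw [← pow_mul, ← pow_succ]
  exact pow_mem_towerField p k x y A (n + 1)

end Tower

theorem stmt17_general {K : Type*} [Field K] (p : ℕ) [Fact p.Prime] [CharP K p]
    (k : Subfield K)
    (x y : K) (halg : AlgebraicIndependent ↥k ![x, y])
    (hgen : Subfield.closure (↑k ∪ {x, y}) = ⊤)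
    (A : ℕ → K) (hA : ∀ i, A i ∈ k)
    (W : ℕ → Subfield K) (hW0 : W 0 = ⊤)
    (hWn : ∀ n : ℕ, W (n + 1) =
      Subfield.closure
        (↑k ∪ {x + ∑ i ∈ Finset.range n, A (i + 1) * y ^ p ^ (i + 1), y ^ p ^ (n + 1)})) :
    IsPowerTower K p W ∧ ∀ n : ℕ, relrank (W (n + 1)) (W n) = p := by
  obtain rfl : W = towerField p k x y A := by
    funext n
    cases n with
    | zero => rw [hW0, ← hgen, towerField, twistedX_zero, pow_zero, pow_one]
    | succ n => rw [hWn, towerField, twistedX_succ]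
  exact ⟨isPowerTower_towerField hA hgen, relrank_towerField_succ hA halg⟩

/-- for `K = k(x,y)` over a perfect field `k` of characteristic `p` and
constants `A₁, A₂, … ∈ k`, the tower `W_n = k(x + A₁y^p + ⋯ + A_{n-1}y^{p^{n-1}}, y^{p^n})`
(with `W_0 = K`) is a power tower on `K` with `[W_{n-1} : W_n] = p` for all `n ≥ 1`:
an ∞-foliation of rank 1. -/
theorem stmt17 {K : Type*} [Field K] (p : ℕ) [Fact p.Prime] [CharP K p]
    (k : Subfield K) (hperf : ∀ a ∈ k, ∃ b ∈ k, b ^ p = a)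
    (x y : K) (halg : AlgebraicIndependent ↥k ![x, y])
    (hgen : Subfield.closure (↑k ∪ {x, y}) = ⊤)
    (A : ℕ → K) (hA : ∀ i, A i ∈ k)
    (W : ℕ → Subfield K) (hW0 : W 0 = ⊤)
    (hWn : ∀ n : ℕ, W (n + 1) =
      Subfield.closure
        (↑k ∪ {x + ∑ i ∈ Finset.range n, A (i + 1) * y ^ p ^ (i + 1), y ^ p ^ (n + 1)})) :
    IsPowerTower K p W ∧ ∀ n : ℕ, relrank (W (n + 1)) (W n) = p :=
  stmt17_general p k x y halg hgen A hA W hW0 hWn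
end
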